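/- arXiv:2401.11608 — 2 statements merged into one kernel-verified Lean document; each statement's English description precedes it below -/
import Mathlib

section
/- Mixed Jacobian-based bound, pointwise version: let f : ℝⁿ → ℝᵐ be continuously differentiable, J an inclusion function for df, x° ∈ [x̲,x̄] a center, and O = (o₁,...,oₙ) an ordering (permutation) of {1,...,n}. Define the interval matrix M by setting its o_i-th column to the o_i-th column of [J(x°_{O_i : x̲}, x°_{O_i : x̄})], where x°_{O_i : y} replaces the coordinates of x° indexed by {o₁,...,o_i} with those of y. Then for every x ∈ [x̲,x̄], f(x) ∈ [M](x − x°) + f(x°). -/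
/-!
Order the coordinates by `o` and move from `c` to `x` one coordinate at a time: the `k`-th move
changes only coordinate `o k`, so by the mean value theorem its increment of `f i` is
`∂_{o k} f_i(ξ) · (x_{o k} - c_{o k})` at a point `ξ` of the segment. That segment lies in the
box `[c_{O_{k+1} : xl}, c_{O_{k+1} : xu}]`, where the `o k`-th column of `J` encloses the partial
derivative, so each increment lies in the interval product of column `o k` of `M` with
`x_{o k} - c_{o k}`. Summing the telescoping increments gives the bound.
-/

/-- Lower endpoint of the product of the real intervals `[al,ah]` and `[bl,bh]`. -/
def imulLo (al ah bl bh : ℝ) : ℝ :=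
  min (min (al * bl) (al * bh)) (min (ah * bl) (ah * bh))

/-- Upper endpoint of the product of the real intervals `[al,ah]` and `[bl,bh]`. -/
def imulHi (al ah bl bh : ℝ) : ℝ :=
  max (max (al * bl) (al * bh)) (max (ah * bl) (ah * bh))

/-- The replacement `c_{O_k : y}`: for the ordering (permutation) `o`, replace
the coordinates of `c` indexed by the first `k` elements `o 0, …, o (k-1)` of
the ordering by those of `y`. -/
def repl {n : ℕ} (o : Equiv.Perm (Fin n)) (k : ℕ) (c y : Fin n → ℝ) : Fin n → ℝ :=
  fun j => if (o.symm j : ℕ) < k then y j else c j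

open Set Function

section IntervalProduct

lemma min_mul_le_mul_of_mem_Icc {al ah a : ℝ} (b : ℝ) (ha : a ∈ Icc al ah) :
    min (al * b) (ah * b) ≤ a * b := by
  rcases le_total 0 b with hb | hb
  · exact (min_le_left _ _).trans (mul_le_mul_of_nonneg_right ha.1 hb)
  · exact (min_le_right _ _).trans (mul_le_mul_of_nonpos_right ha.2 hb)

lemma mul_le_max_mul_of_mem_Icc {al ah a : ℝ} (b : ℝ) (ha : a ∈ Icc al ah) :
    a * b ≤ max (al * b) (ah * b) := by
  rcases le_total 0 b with hb | hb
  · exact (mul_le_mul_of_nonneg_right ha.2 hb).trans (le_max_right _ _)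
  · exact (mul_le_mul_of_nonpos_right ha.1 hb).trans (le_max_left _ _)

lemma mul_mem_Icc_imulLo_imulHi {al ah bl bh a b : ℝ} (ha : a ∈ Icc al ah)
    (hb : b ∈ Icc bl bh) :
    a * b ∈ Icc (imulLo al ah bl bh) (imulHi al ah bl bh) := by
  constructor
  · calc imulLo al ah bl bh ≤ min (al * b) (ah * b) :=
          min_le_min (by simpa only [mul_comm al] using min_mul_le_mul_of_mem_Icc al hb)
            (by simpa only [mul_comm ah] using min_mul_le_mul_of_mem_Icc ah hb)
      _ ≤ a * b := min_mul_le_mul_of_mem_Icc b ha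
  · calc a * b ≤ max (al * b) (ah * b) := mul_le_max_mul_of_mem_Icc b ha
      _ ≤ imulHi al ah bl bh :=
          max_le_max (by simpa only [mul_comm al] using mul_le_max_mul_of_mem_Icc al hb)
            (by simpa only [mul_comm ah] using mul_le_max_mul_of_mem_Icc ah hb)

end IntervalProduct

section MeanValue

lemma exists_mem_uIcc_sub_eq_mul {g g' : ℝ → ℝ} (hg : ∀ t, HasDerivAt g (g' t) t)
    (a b : ℝ) :
    ∃ ξ ∈ uIcc a b, g b - g a = g' ξ * (b - a) := by
  wlog hab : a < b generalizing a b
  · rcases (not_lt.1 hab).eq_or_lt with rfl | hba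
    · exact ⟨b, left_mem_uIcc, by ring⟩
    · obtain ⟨ξ, hξ, h⟩ := this b a hba
      exact ⟨ξ, uIcc_comm a b ▸ hξ, by linear_combination -h⟩
  obtain ⟨ξ, hξ, h⟩ := exists_hasDerivAt_eq_slope g g' hab
    (fun t _ => (hg t).continuousAt.continuousWithinAt) (fun t _ => hg t)
  exact ⟨ξ, Icc_subset_uIcc (Ioo_subset_Icc_self hξ),
    by rw [h, div_mul_cancel₀ _ (sub_ne_zero.2 hab.ne')]⟩

variable {ι κ : Type*} [Fintype ι] [DecidableEq ι] [Fintype κ]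

lemma exists_mem_uIcc_update_sub_eq_fderiv_mul {f : (ι → ℝ) → κ → ℝ}
    (hf : Differentiable ℝ f) (y : ι → ℝ) (j : ι) (i : κ) (a b : ℝ) :
    ∃ ξ ∈ uIcc a b, f (update y j b) i - f (update y j a) i =
      fderiv ℝ f (update y j ξ) (Pi.single j 1) i * (b - a) := by
  refine exists_mem_uIcc_sub_eq_mul (g := fun t => f (update y j t) i) (fun t => ?_) a b
  exact hasDerivAt_pi.1 ((hf _).hasFDerivAt.comp_hasDerivAt t (hasDerivAt_update y j t)) i

lemma update_sub_mem_Icc_imul_of_fderiv_mem {f : (ι → ℝ) → κ → ℝ}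
    (hf : Differentiable ℝ f) (y : ι → ℝ) (j : ι) (i : κ) {b L U : ℝ}
    (hD : ∀ ξ ∈ uIcc (y j) b, fderiv ℝ f (update y j ξ) (Pi.single j 1) i ∈ Icc L U) :
    f (update y j b) i - f y i ∈
      Icc (imulLo L U (b - y j) (b - y j)) (imulHi L U (b - y j) (b - y j)) := by
  obtain ⟨ξ, hξ, heq⟩ := exists_mem_uIcc_update_sub_eq_fderiv_mul hf y j i (y j) b
  rw [update_eq_self] at heq
  rw [heq]
  exact mul_mem_Icc_imulLo_imulHi (hD ξ hξ) ⟨le_rfl, le_rfl⟩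

end MeanValue

section Replacement

variable {n : ℕ} (o : Equiv.Perm (Fin n)) (c : Fin n → ℝ)

@[simp]
lemma repl_zero (y : Fin n → ℝ) : repl o 0 c y = c := by
  ext j; simp [repl]

lemma repl_of_le {k : ℕ} (hk : n ≤ k) (y : Fin n → ℝ) : repl o k c y = y := by
  ext j; simp [repl, (o.symm j).is_lt.trans_le hk]

lemma repl_apply_self (k : Fin n) (y : Fin n → ℝ) : repl o k c y (o k) = c (o k) := by
  simp [repl]

lemma repl_succ (k : Fin n) (y : Fin n → ℝ) :
    repl o ((k : ℕ) + 1) c y = update (repl o k c y) (o k) (y (o k)) := by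
  ext j
  by_cases h : j = o k
  · subst h; simp [repl]
  · have hk : (o.symm j : ℕ) ≠ k := fun e => h (by rw [← Fin.ext e, o.apply_symm_apply])
    simp only [repl, update_of_ne h, Nat.lt_succ_iff_lt_or_eq, hk, or_false]

lemma sum_repl_succ_sub {α : Type*} [AddCommGroup α] (g : (Fin n → ℝ) → α)
    (x : Fin n → ℝ) :
    ∑ k : Fin n, (g (repl o ((k : ℕ) + 1) c x) - g (repl o k c x)) = g x - g c := by
  rw [Fin.sum_univ_eq_sum_range (fun k => g (repl o ((k : ℕ) + 1) c x) - g (repl o k c x)),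
    Finset.sum_range_sub (fun k => g (repl o k c x)), repl_of_le o c le_rfl, repl_zero]

lemma repl_mem_Icc_repl {k : ℕ} {xl xu x : Fin n → ℝ} (hx : x ∈ Icc xl xu) :
    repl o k c x ∈ Icc (repl o k c xl) (repl o k c xu) := by
  constructor <;> intro j <;> simp only [repl] <;> split_ifs
  exacts [hx.1 j, le_rfl, hx.2 j, le_rfl]

lemma update_repl_mem_Icc (k : Fin n) {xl xu x : Fin n → ℝ} (hx : x ∈ Icc xl xu) {t : ℝ}
    (ht : t ∈ Icc (xl (o k)) (xu (o k))) :
    update (repl o k c x) (o k) t ∈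
      Icc (repl o ((k : ℕ) + 1) c xl) (repl o ((k : ℕ) + 1) c xu) := by
  have hbox := repl_mem_Icc_repl o c (k := k) hx
  rw [repl_succ, repl_succ]
  exact ⟨update_le_update_iff.2 ⟨ht.1, fun j _ => hbox.1 j⟩,
    update_le_update_iff.2 ⟨ht.2, fun j _ => hbox.2 j⟩⟩

end Replacement

def IsJacobianInclusion {n m : ℕ} (f : (Fin n → ℝ) → (Fin m → ℝ))
    (Jlo Jhi : (Fin n → ℝ) → (Fin n → ℝ) → Matrix (Fin m) (Fin n) ℝ) : Prop :=
  ∀ al au : Fin n → ℝ, al ≤ au → ∀ y ∈ Icc al au, ∀ i j,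
    Jlo al au i j ≤ fderiv ℝ f y (Pi.single j 1) i ∧
      fderiv ℝ f y (Pi.single j 1) i ≤ Jhi al au i j

def mixedJacobian {n m : ℕ}
    (J : (Fin n → ℝ) → (Fin n → ℝ) → Matrix (Fin m) (Fin n) ℝ)
    (o : Equiv.Perm (Fin n)) (c xl xu : Fin n → ℝ) : Matrix (Fin m) (Fin n) ℝ :=
  Matrix.of fun i j =>
    J (repl o ((o.symm j : ℕ) + 1) c xl) (repl o ((o.symm j : ℕ) + 1) c xu) i j

lemma repl_succ_sub_mem_Icc_imul {n m : ℕ} {f : (Fin n → ℝ) → (Fin m → ℝ)}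
    (hf : Differentiable ℝ f)
    {Jlo Jhi : (Fin n → ℝ) → (Fin n → ℝ) → Matrix (Fin m) (Fin n) ℝ}
    (hJ : IsJacobianInclusion f Jlo Jhi) (o : Equiv.Perm (Fin n)) {xl xu c x : Fin n → ℝ}
    (hc : c ∈ Icc xl xu) (hx : x ∈ Icc xl xu) (i : Fin m) (k : Fin n) :
    f (repl o ((k : ℕ) + 1) c x) i - f (repl o k c x) i ∈
      Icc (imulLo (mixedJacobian Jlo o c xl xu i (o k)) (mixedJacobian Jhi o c xl xu i (o k))
          (x (o k) - c (o k)) (x (o k) - c (o k)))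
        (imulHi (mixedJacobian Jlo o c xl xu i (o k)) (mixedJacobian Jhi o c xl xu i (o k))
          (x (o k) - c (o k)) (x (o k) - c (o k))) := by
  simp only [mixedJacobian, Matrix.of_apply, Equiv.symm_apply_apply]
  rw [repl_succ o c k x, ← repl_apply_self o c k x]
  refine update_sub_mem_Icc_imul_of_fderiv_mem hf _ _ _ fun ξ hξ => ?_
  rw [repl_apply_self] at hξ
  have hξ' : ξ ∈ Icc (xl (o k)) (xu (o k)) :=
    uIcc_subset_Icc ⟨hc.1 (o k), hc.2 (o k)⟩ ⟨hx.1 (o k), hx.2 (o k)⟩ hξ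
  have hmem := update_repl_mem_Icc o c k hx hξ'
  exact hJ _ _ (hmem.1.trans hmem.2) _ hmem i (o k)

theorem mixed_jacobian_pointwise_bound_general {n m : ℕ}
    (f : (Fin n → ℝ) → (Fin m → ℝ)) (hf : ContDiff ℝ 1 f)
    (Jlo Jhi : (Fin n → ℝ) → (Fin n → ℝ) → Matrix (Fin m) (Fin n) ℝ)
    (hJ : ∀ al au : Fin n → ℝ, al ≤ au → ∀ y ∈ Set.Icc al au, ∀ i j,
      Jlo al au i j ≤ fderiv ℝ f y (Pi.single j 1) i ∧
        fderiv ℝ f y (Pi.single j 1) i ≤ Jhi al au i j)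
    (xl xu : Fin n → ℝ)
    (c : Fin n → ℝ) (hc : c ∈ Set.Icc xl xu)
    (o : Equiv.Perm (Fin n))
    (Mlo Mhi : Matrix (Fin m) (Fin n) ℝ)
    (hMlo : ∀ i j, Mlo i j =
      Jlo (repl o ((o.symm j : ℕ) + 1) c xl) (repl o ((o.symm j : ℕ) + 1) c xu) i j)
    (hMhi : ∀ i j, Mhi i j =
      Jhi (repl o ((o.symm j : ℕ) + 1) c xl) (repl o ((o.symm j : ℕ) + 1) c xu) i j)
    (x : Fin n → ℝ) (hmem : x ∈ Set.Icc xl xu) (i : Fin m) :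
    (∑ j, imulLo (Mlo i j) (Mhi i j) (x j - c j) (x j - c j)) + f c i ≤ f x i ∧
      f x i ≤ (∑ j, imulHi (Mlo i j) (Mhi i j) (x j - c j) (x j - c j)) + f c i := by
  obtain rfl : Mlo = mixedJacobian Jlo o c xl xu := Matrix.ext hMlo
  obtain rfl : Mhi = mixedJacobian Jhi o c xl xu := Matrix.ext hMhi
  have step (k : Fin n) :=
    repl_succ_sub_mem_Icc_imul (hf.differentiable one_ne_zero) hJ o hc hmem i k
  have htele := sum_repl_succ_sub o c (fun y => f y i) x
  constructor
  · rw [← Equiv.sum_comp o, ← le_sub_iff_add_le, ← htele]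
    exact Finset.sum_le_sum fun k _ => (step k).1
  · rw [← Equiv.sum_comp o, ← sub_le_iff_le_add, ← htele]
    exact Finset.sum_le_sum fun k _ => (step k).2

/-- Mixed Jacobian-based bound, pointwise version: with `J` an inclusion
function for the Jacobian of `f`, center `c ∈ [xl,xu]` and ordering `o`, the
mixed interval Jacobian `M` whose `o i`-th column is the `o i`-th column of
`[J(c_{O_{i+1}:xl}, c_{O_{i+1}:xu})]` satisfies
`f x ∈ [M](x − c) + f c` for every `x ∈ [xl,xu]`. -/
theorem mixed_jacobian_pointwise_bound {n m : ℕ}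
    (f : (Fin n → ℝ) → (Fin m → ℝ)) (hf : ContDiff ℝ 1 f)
    (Jlo Jhi : (Fin n → ℝ) → (Fin n → ℝ) → Matrix (Fin m) (Fin n) ℝ)
    (hJ : ∀ al au : Fin n → ℝ, al ≤ au → ∀ y ∈ Set.Icc al au, ∀ i j,
      Jlo al au i j ≤ fderiv ℝ f y (Pi.single j 1) i ∧
        fderiv ℝ f y (Pi.single j 1) i ≤ Jhi al au i j)
    (xl xu : Fin n → ℝ) (hx : xl ≤ xu)
    (c : Fin n → ℝ) (hc : c ∈ Set.Icc xl xu)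
    (o : Equiv.Perm (Fin n))
    (Mlo Mhi : Matrix (Fin m) (Fin n) ℝ)
    (hMlo : ∀ i j, Mlo i j =
      Jlo (repl o ((o.symm j : ℕ) + 1) c xl) (repl o ((o.symm j : ℕ) + 1) c xu) i j)
    (hMhi : ∀ i j, Mhi i j =
      Jhi (repl o ((o.symm j : ℕ) + 1) c xl) (repl o ((o.symm j : ℕ) + 1) c xu) i j)
    (x : Fin n → ℝ) (hmem : x ∈ Set.Icc xl xu) (i : Fin m) :
    (∑ j, imulLo (Mlo i j) (Mhi i j) (x j - c j) (x j - c j)) + f c i ≤ f x i ∧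
      f x i ≤ (∑ j, imulHi (Mlo i j) (Mhi i j) (x j - c j) (x j - c j)) + f c i :=
  mixed_jacobian_pointwise_bound_general f hf Jlo Jhi hJ xl xu c hc o Mlo Mhi hMlo hMhi x hmem i
end

section
/- Monotone inclusion functions induce monotone embedding dynamics with respect to the southeast order: if F is a monotone inclusion function for f(x,w), then the embedding vector field E defined by E̲_i(x̲,x̄,w̲,w̄) = F̲_i(x̲, x̄_{i:x̲}, w̲, w̄) and Ē_i(x̲,x̄,w̲,w̄) = F̄_i(x̲_{i:x̄}, x̄, w̲, w̄) satisfies the Kamke–Müller condition for the southeast order: if (x̲,x̄) ≤_SE (y̲,ȳ), x̲_i = y̲_i, and (w̲,w̄) ≤_SE (v̲,v̄), then E̲_i(x̲,x̄,w̲,w̄) ≤ E̲_i(y̲,ȳ,v̲,v̄) (and the symmetric condition for Ē). -/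
/-!
Replacing the `i`-th upper bound by the `i`-th lower bound turns a box into its lower `i`-th
face. When `(xl, xu) ≤SE (yl, yu)` and `xl i = yl i`, the lower `i`-th face of `[yl, yu]` lies
inside that of `[xl, xu]`, so monotonicity of the inclusion function compares the two lower
bounds; the upper component is symmetric.
-/

open Function

section BoxFace

variable {ι α : Type*} [DecidableEq ι] [Preorder α] {l u : ι → α}

theorem le_update_apply_of_le (h : l ≤ u) (i : ι) : l ≤ update u i (l i) :=
  le_update_iff.2 ⟨le_rfl, fun j _ => h j⟩

theorem update_apply_le_of_le (h : l ≤ u) (i : ι) : update l i (u i) ≤ u :=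
  update_le_iff.2 ⟨le_rfl, fun j _ => h j⟩

end BoxFace

theorem embedding_kamke_muller_general {n q : ℕ}
    (Flo Fhi : (Fin n → ℝ) → (Fin n → ℝ) → (Fin q → ℝ) → (Fin q → ℝ) → (Fin n → ℝ))
    -- ... which is monotone: containment of input intervals nests the bounds.
    (hFmono : ∀ xl xu wl wu yl yu vl vu, xl ≤ xu → wl ≤ wu →
      yl ≤ xl → xu ≤ yu → vl ≤ wl → wu ≤ vu →
        Flo yl yu vl vu ≤ Flo xl xu wl wu ∧ Fhi xl xu wl wu ≤ Fhi yl yu vl vu)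
    (xl xu yl yu : Fin n → ℝ) (wl wu vl vu : Fin q → ℝ)
    (hyl : yl ≤ yu) (hvl : vl ≤ vu)
    -- (xl,xu) ≤SE (yl,yu) and (wl,wu) ≤SE (vl,vu)
    (hSEx : xl ≤ yl ∧ yu ≤ xu) (hSEw : wl ≤ vl ∧ vu ≤ wu)
    (i : Fin n) :
    -- Kamke–Müller for the lower component ...
    (xl i = yl i →
      Flo xl (Function.update xu i (xl i)) wl wu i ≤
        Flo yl (Function.update yu i (yl i)) vl vu i) ∧
    -- ... and the symmetric condition for the upper component.
    (xu i = yu i →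
      Fhi (Function.update yl i (yu i)) yu vl vu i ≤
        Fhi (Function.update xl i (xu i)) xu wl wu i) := by
  obtain ⟨hxy, hyx⟩ := hSEx
  obtain ⟨hwv, hvw⟩ := hSEw
  refine ⟨fun hi => ?_, fun hi => ?_⟩
  · have hface : update yu i (yl i) ≤ update xu i (xl i) :=
      update_le_update_iff.2 ⟨hi.ge, fun j _ => hyx j⟩
    exact (hFmono _ _ vl vu _ _ wl wu (le_update_apply_of_le hyl i) hvl hxy hface hwv hvw).1 i
  · have hface : update xl i (xu i) ≤ update yl i (yu i) :=
      update_le_update_iff.2 ⟨hi.le, fun j _ => hxy j⟩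
    exact (hFmono _ _ vl vu _ _ wl wu (update_apply_le_of_le hyl i) hvl hface hyx hwv hvw).2 i

/-- A monotone inclusion function for `f(x,w)` induces embedding dynamics
`E̲_i(xl,xu,wl,wu) = F̲_i(xl, xu_{i:xl}, wl, wu)`,
`Ē_i(xl,xu,wl,wu) = F̄_i(xl_{i:xu}, xu, wl, wu)` satisfying the Kamke–Müller
condition for the southeast order. -/
theorem embedding_kamke_muller {n q : ℕ}
    (f : (Fin n → ℝ) → (Fin q → ℝ) → (Fin n → ℝ))
    (Flo Fhi : (Fin n → ℝ) → (Fin n → ℝ) → (Fin q → ℝ) → (Fin q → ℝ) → (Fin n → ℝ))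
    -- F is an inclusion function for f ...
    (hF : ∀ xl xu wl wu, xl ≤ xu → wl ≤ wu →
      ∀ x ∈ Set.Icc xl xu, ∀ w ∈ Set.Icc wl wu,
        Flo xl xu wl wu ≤ f x w ∧ f x w ≤ Fhi xl xu wl wu)
    -- ... which is monotone: containment of input intervals nests the bounds.
    (hFmono : ∀ xl xu wl wu yl yu vl vu, xl ≤ xu → wl ≤ wu →
      yl ≤ xl → xu ≤ yu → vl ≤ wl → wu ≤ vu →
        Flo yl yu vl vu ≤ Flo xl xu wl wu ∧ Fhi xl xu wl wu ≤ Fhi yl yu vl vu)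
    (xl xu yl yu : Fin n → ℝ) (wl wu vl vu : Fin q → ℝ)
    (hxl : xl ≤ xu) (hyl : yl ≤ yu) (hwl : wl ≤ wu) (hvl : vl ≤ vu)
    -- (xl,xu) ≤SE (yl,yu) and (wl,wu) ≤SE (vl,vu)
    (hSEx : xl ≤ yl ∧ yu ≤ xu) (hSEw : wl ≤ vl ∧ vu ≤ wu)
    (i : Fin n) :
    -- Kamke–Müller for the lower component ...
    (xl i = yl i →
      Flo xl (Function.update xu i (xl i)) wl wu i ≤
        Flo yl (Function.update yu i (yl i)) vl vu i) ∧
    -- ... and the symmetric condition for the upper component.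
    (xu i = yu i →
      Fhi (Function.update yl i (yu i)) yu vl vu i ≤
        Fhi (Function.update xl i (xu i)) xu wl wu i) :=
  embedding_kamke_muller_general Flo Fhi hFmono xl xu yl yu wl wu vl vu hyl hvl hSEx hSEw i
end
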